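/- arXiv:cs/0606070 — 2 statements merged into one kernel-verified Lean document; each statement's English description precedes it below -/
import Mathlib

section
/- There exists a single computable predictor that learns to predict every periodic binary sequence: there is a computable p : List Bool → Bool such that for every ω : ℕ → Bool, if there exists T > 0 with ω (n + T) = ω n for all n, then there exists m such that p applied to the length-n prefix of ω equals ω n for all n ≥ m. -/
/-- The length-`n` prefix `[ω 0, …, ω (n−1)]` of a binary sequence `ω`. -/
def prefixList (ω : ℕ → Bool) (n : ℕ) : List Bool := (List.range n).map ω

/-- A predictor `p` learns to predict the sequence `ω` if from some point on it
always predicts the next symbol correctly. -/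
def LearnsToPredict (p : List Bool → Bool) (ω : ℕ → Bool) : Prop :=
  ∃ m : ℕ, ∀ n ≥ m, p (prefixList ω n) = ω n

/-- check that position `i` agrees with position `i+t`. -/
def chk (s : List Bool) (t i : ℕ) : Bool := s.getD (i + t) false == s.getD i false

/-- `s` looks `t`-periodic. -/
def isPer (s : List Bool) (t : ℕ) : Bool :=
  (List.range (s.length - t)).foldr (fun i b => chk s t i && b) true

def goodp (s : List Bool) (t : ℕ) : Bool := decide (0 < t) && isPer s t

/-- minimal apparent period. -/
def mp (s : List Bool) : ℕ :=
  (List.range (s.length + 1)).foldr (fun t acc => cond (goodp s t) t acc) 0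

def predictor (s : List Bool) : Bool := s.getD (s.length - mp s) false

theorem isPer_primrec : Primrec fun a : List Bool × ℕ => isPer a.1 a.2 := by
  have hb1 : Primrec fun x : (List Bool × ℕ) × (ℕ × Bool) =>
      x.1.1.getD (x.2.1 + x.1.2) false :=
    (Primrec.list_getD false).comp (Primrec.fst.comp Primrec.fst)
      (Primrec.nat_add.comp (Primrec.fst.comp Primrec.snd) (Primrec.snd.comp Primrec.fst))
  have hb2 : Primrec fun x : (List Bool × ℕ) × (ℕ × Bool) => x.1.1.getD x.2.1 false :=
    (Primrec.list_getD false).comp (Primrec.fst.comp Primrec.fst)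
      (Primrec.fst.comp Primrec.snd)
  have hh : Primrec₂ (fun (a : List Bool × ℕ) (p : ℕ × Bool) => chk a.1 a.2 p.1 && p.2) := by
    have : Primrec fun x : (List Bool × ℕ) × (ℕ × Bool) =>
        (x.1.1.getD (x.2.1 + x.1.2) false == x.1.1.getD x.2.1 false) && x.2.2 :=
      (Primrec.dom_bool₂ (· && ·)).comp
        ((Primrec.dom_bool₂ (· == ·)).comp hb1 hb2)
        (Primrec.snd.comp Primrec.snd)
    exact this
  exact Primrec.list_foldr
    (Primrec.list_range.comp (Primrec.nat_sub.comp (Primrec.list_length.comp Primrec.fst)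
      Primrec.snd))
    (Primrec.const true) hh

theorem predictor_computable : Computable predictor := by
  have hgood : Primrec fun a : List Bool × ℕ => goodp a.1 a.2 :=
    (Primrec.dom_bool₂ (· && ·)).comp
      (Primrec.ite (Primrec.nat_lt.comp (Primrec.const 0) Primrec.snd)
        (Primrec.const true) (Primrec.const false))
      isPer_primrec
  have hmp : Primrec mp := by
    have := Primrec.list_foldr
      (f := fun s : List Bool => List.range (s.length + 1))
      (g := fun _ : List Bool => (0 : ℕ))
      (h := fun s (p : ℕ × ℕ) => cond (goodp s p.1) p.1 p.2)
      (Primrec.list_range.comp (Primrec.succ.comp Primrec.list_length))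
      (Primrec.const 0)
      (Primrec.cond (hgood.comp (Primrec.pair Primrec.fst (Primrec.fst.comp Primrec.snd)))
        (Primrec.fst.comp Primrec.snd) (Primrec.snd.comp Primrec.snd))
    exact this
  exact Primrec.to_comp <|
    (Primrec.list_getD false).comp Primrec.id
      (Primrec.nat_sub.comp Primrec.list_length hmp)


lemma prefixList_length (ω : ℕ → Bool) (n : ℕ) : (prefixList ω n).length = n := by
  simp [prefixList]

lemma prefixList_getD (ω : ℕ → Bool) {n i : ℕ} (h : i < n) :
    (prefixList ω n).getD i false = ω i := by
  simp [prefixList, List.getD, List.getElem?_map, List.getElem?_range h]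

lemma foldr_and_eq_true {f : ℕ → Bool} {l : List ℕ} :
    l.foldr (fun i b => f i && b) true = true ↔ ∀ i ∈ l, f i = true := by
  induction l with
  | nil => simp
  | cons a l ih => simp [ih]

lemma isPer_iff (s : List Bool) (t : ℕ) :
    isPer s t = true ↔ ∀ i < s.length - t, chk s t i = true := by
  simp [isPer, foldr_and_eq_true, List.mem_range]

lemma foldr_min_of_false {g : ℕ → Bool} {l : List ℕ} {a : ℕ}
    (h : ∀ t ∈ l, g t = false) :
    l.foldr (fun t acc => cond (g t) t acc) a = a := by
  induction l with
  | nil => rfl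
  | cons b l ih =>
    simp only [List.foldr_cons, h b (by simp), ih (fun t ht => h t (by simp [ht]))]
    rfl

lemma mp_eq {s : List Bool} {t : ℕ} (ht : t ≤ s.length) (hg : goodp s t = true)
    (hmin : ∀ u < t, goodp s u = false) : mp s = t := by
  unfold mp
  have hsplit : s.length + 1 = t + (s.length - t + 1) := by omega
  rw [hsplit, List.range_add, List.foldr_append]
  have h2 : (List.range (s.length - t + 1)).map (t + ·) =
      (t + 0) :: (List.map Nat.succ (List.range (s.length - t))).map (t + ·) := by
    rw [List.range_succ_eq_map]; simp
  rw [h2]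
  simp only [List.foldr_cons]
  have : cond (goodp s (t + 0)) (t + 0)
      (List.foldr (fun t_1 acc => cond (goodp s t_1) t_1 acc) 0
        ((List.map Nat.succ (List.range (s.length - t))).map (t + ·))) = t := by
    simp [hg]
  rw [this]
  exact foldr_min_of_false (fun u hu => hmin u (List.mem_range.mp hu))

/-- A single computable predictor learns every periodic binary sequence. -/
theorem stmt_6 :
    ∃ p : List Bool → Bool, Computable p ∧
      ∀ ω : ℕ → Bool, (∃ T : ℕ, 0 < T ∧ ∀ n : ℕ, ω (n + T) = ω n) →
        LearnsToPredict p ω := by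
  classical
  refine ⟨predictor, predictor_computable, ?_⟩
  intro ω hex
  set t0 := Nat.find hex with ht0def
  obtain ⟨ht0pos, ht0per⟩ := Nat.find_spec hex
  have hwit : ∀ t, 0 < t → t < t0 → ∃ c, ω (c + t) ≠ ω c := by
    intro t hpos hlt
    by_contra h; push_neg at h
    exact Nat.find_min hex hlt ⟨hpos, h⟩
  choose! c hc using hwit
  refine ⟨t0 + 1 + (Finset.range t0).sup (fun t => c t + t + 1), ?_⟩
  intro n hn
  have ht0n : t0 < n := by omega
  have hlen : (prefixList ω n).length = n := prefixList_length ω n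
  -- goodp at t0
  have hgood : goodp (prefixList ω n) t0 = true := by
    unfold goodp
    rw [Bool.and_eq_true, decide_eq_true_iff]
    refine ⟨ht0pos, (isPer_iff _ _).mpr ?_⟩
    intro i hi
    rw [hlen] at hi
    have hi2 : i + t0 < n := by omega
    simp only [chk, prefixList_getD ω hi2, prefixList_getD ω (by omega : i < n)]
    rw [beq_iff_eq]
    exact ht0per i
  -- goodp fails below t0
  have hbad : ∀ u < t0, goodp (prefixList ω n) u = false := by
    intro u hu
    unfold goodp
    rcases Nat.eq_zero_or_pos u with h0 | hpos
    · simp [h0]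
    have hcu : ω (c u + u) ≠ ω (c u) := hc u hpos hu
    have hsup : c u + u + 1 ≤ (Finset.range t0).sup (fun t => c t + t + 1) :=
      Finset.le_sup (f := fun t => c t + t + 1) (Finset.mem_range.mpr hu)
    have hcun : c u + u < n := by omega
    rw [Bool.and_eq_false_iff]
    right
    rw [← Bool.not_eq_true, isPer_iff]
    push_neg
    refine ⟨c u, by omega, ?_⟩
    simp only [chk, prefixList_getD ω hcun, prefixList_getD ω (by omega : c u < n)]
    simp [hcu]
  have hmp : mp (prefixList ω n) = t0 := by
    refine mp_eq (by omega) hgood ?_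
    intro u hu; exact hbad u hu
  show (prefixList ω n).getD ((prefixList ω n).length - mp (prefixList ω n)) false = ω n
  rw [hmp, hlen, prefixList_getD ω (by omega : n - t0 < n)]
  have := ht0per (n - t0)
  rw [Nat.sub_add_cancel (by omega)] at this
  exact this.symm
end

section
/- For every finite list of computable predictors there exists a single computable sequence on which every predictor in the list makes infinitely many prediction errors: for every L : List (List Bool → Bool) such that every p ∈ L is computable, there exists a computable ω : ℕ → Bool such that for every p ∈ L and every m ∈ ℕ there exists n ≥ m with p applied to the length-n prefix [ω 0, …, ω (n−1)] not equal to ω n. In particular, no predictor in L learns to predict ω. -/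
lemma prefixList_succ (ω : ℕ → Bool) (n : ℕ) :
    prefixList ω (n + 1) = prefixList ω n ++ [ω n] := by
  simp [prefixList, List.range_succ]

lemma not_learnsToPredict_of_frequently_ne {p : List Bool → Bool} {ω : ℕ → Bool}
    (h : ∀ m : ℕ, ∃ n ≥ m, p (prefixList ω n) ≠ ω n) : ¬ LearnsToPredict p ω := by
  rintro ⟨m, hm⟩
  obtain ⟨n, hn, hne⟩ := h m
  exact hne (hm n hn)

section Diagonal

variable (q : ℕ → List Bool → Bool)

def diagPrefix : ℕ → List Bool
  | 0 => []
  | n + 1 => diagPrefix n ++ [!q n (diagPrefix n)]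

def diagSeq (n : ℕ) : Bool := !q n (diagPrefix q n)

lemma diagPrefix_eq_prefixList (n : ℕ) : diagPrefix q n = prefixList (diagSeq q) n := by
  induction n with
  | zero => rfl
  | succ n ih => rw [diagPrefix, prefixList_succ, ← ih, diagSeq]

lemma diagSeq_ne (n : ℕ) : q n (prefixList (diagSeq q) n) ≠ diagSeq q n := by
  rw [← diagPrefix_eq_prefixList, diagSeq]
  exact (Bool.not_ne_self _).symm

variable {q}

lemma computable_diagPrefix (hq : Computable₂ q) : Computable (diagPrefix q) := by
  have hstep : Computable₂ fun (_ : ℕ) (x : ℕ × List Bool) => x.2 ++ [!q x.1 x.2] :=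
    (Computable.list_concat.comp (Computable.snd.comp .snd)
      (Primrec.not.to_comp.comp
        (hq.comp (Computable.fst.comp .snd) (Computable.snd.comp .snd)))).to₂
  refine (Computable.nat_rec .id (Computable.const []) hstep).of_eq fun n => ?_
  induction n with
  | zero => rfl
  | succ n ih => simp only [id, diagPrefix, ← ih]

lemma computable_diagSeq (hq : Computable₂ q) : Computable (diagSeq q) :=
  Primrec.not.to_comp.comp (hq.comp .id (computable_diagPrefix hq))

end Diagonal

section RoundRobin

lemma computable_map_apply {α β : Type*} [Primcodable α] [Primcodable β] {L : List (α → β)}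
    (hL : ∀ f ∈ L, Computable f) : Computable fun a => L.map (· a) := by
  induction L with
  | nil => exact Computable.const []
  | cons f L ih =>
      rw [List.forall_mem_cons] at hL
      exact Computable.list_cons.comp hL.1 (ih hL.2)

variable {L : List (List Bool → Bool)}

def roundRobin (L : List (List Bool → Bool)) (n : ℕ) (l : List Bool) : Bool :=
  (L.map (· l)).getD (n % L.length) false

lemma computable₂_roundRobin (hL : ∀ p ∈ L, Computable p) : Computable₂ (roundRobin L) :=
  (Primrec.list_getD false).to_comp.comp ((computable_map_apply hL).comp .snd)
    (Primrec.nat_mod.to_comp.comp .fst (Computable.const L.length))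

lemma exists_roundRobin_eq {p : List Bool → Bool} (hp : p ∈ L) (m : ℕ) :
    ∃ n ≥ m, roundRobin L n = p := by
  obtain ⟨i, hi, rfl⟩ := List.mem_iff_getElem.1 hp
  refine ⟨m * L.length + i, ?_, funext fun l => ?_⟩
  · nlinarith
  · rw [roundRobin, Nat.mul_add_mod_self_right, Nat.mod_eq_of_lt hi,
      List.getD_eq_getElem _ _ (by simpa using hi), List.getElem_map]

end RoundRobin

/-- For every finite list of computable predictors there is a single computable
sequence on which each of these predictors makes infinitely many errors; in
particular none of them learns to predict it. -/
theorem stmt_8 :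
    ∀ L : List (List Bool → Bool), (∀ p ∈ L, Computable p) →
      ∃ ω : ℕ → Bool, Computable ω ∧
        (∀ p ∈ L, ∀ m : ℕ, ∃ n ≥ m, p (prefixList ω n) ≠ ω n) ∧
        ∀ p ∈ L, ¬ LearnsToPredict p ω := by
  intro L hL
  have herr : ∀ p ∈ L, ∀ m : ℕ, ∃ n ≥ m,
      p (prefixList (diagSeq (roundRobin L)) n) ≠ diagSeq (roundRobin L) n := by
    intro p hp m
    obtain ⟨n, hn, hpn⟩ := exists_roundRobin_eq hp m
    exact ⟨n, hn, hpn ▸ diagSeq_ne _ n⟩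
  exact ⟨diagSeq (roundRobin L), computable_diagSeq (computable₂_roundRobin hL), herr,
    fun p hp => not_learnsToPredict_of_frequently_ne (herr p hp)⟩
end
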